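/- Let X_1, X_2, ... be an i.i.d. sequence of real-valued random variables with common distribution function F, and let F_n denote the empirical distribution function of the first n observations. Fix p ∈ (0,1). If lq_F(p) = rq_F(p), then the right sample quantile converges almost surely: rq_{F_n}(p) → rq_F(p) almost surely as n → ∞. -/

import Mathlib

open MeasureTheory ProbabilityTheory Filter Topology

/-- Left quantile of a distribution function `F` at level `p`:
`lq F p = inf {x | F x ≥ p}`. -/
noncomputable def lq (F : ℝ → ℝ) (p : ℝ) : ℝ := sInf {x : ℝ | p ≤ F x}

/-- Right quantile of a distribution function `F` at level `p`:
`rq F p = inf {x | F x > p}`. -/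
noncomputable def rq (F : ℝ → ℝ) (p : ℝ) : ℝ := sInf {x : ℝ | p < F x}

/-- Empirical distribution function of the first `n` observations `X 0, ..., X (n-1)`:
`edf X n ω x = (1/n) * #{i < n | X i ω ≤ x}`. -/
noncomputable def edf {Ω : Type*} (X : ℕ → Ω → ℝ) (n : ℕ) (ω : Ω) (x : ℝ) : ℝ :=
  ((Finset.range n).filter (fun i => X i ω ≤ x)).card / n

/-
By the strong law of large numbers applied to the indicators of `{X i ≤ r}`, almost surely
`F_n r → F r` simultaneously for all rationals `r`. Let `q = rq F p = lq F p`. For rationals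
`r < q < s` this uniqueness of the quantile gives `F r < p < F s`, hence eventually
`F_n r < p < F_n s`, and monotonicity of `F_n` traps `rq F_n p` in `[r, s]`.
-/

section Quantile

variable {F : ℝ → ℝ} {p a b : ℝ}

lemma Monotone.mem_lowerBounds_setOf_le (hF : Monotone F) (ha : F a < p) :
    a ∈ lowerBounds {x | p ≤ F x} :=
  fun _ hx => le_of_not_gt fun hxa => (hF hxa.le).not_gt (ha.trans_le hx)

lemma Monotone.rq_mem_Icc (hF : Monotone F) (ha : F a < p) (hb : p < F b) :
    rq F p ∈ Set.Icc a b :=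
  have hlow : a ∈ lowerBounds {x | p < F x} :=
    fun _ hx => hF.mem_lowerBounds_setOf_le ha (le_of_lt (α := ℝ) hx)
  ⟨le_csInf ⟨b, hb⟩ hlow, csInf_le ⟨a, hlow⟩ hb⟩

lemma lt_of_lt_lq (hbdd : BddBelow {x | p ≤ F x}) (ha : a < lq F p) : F a < p :=
  lt_of_not_ge fun h => (csInf_le hbdd h).not_gt ha

lemma Monotone.lt_of_rq_lt (hF : Monotone F) (hne : ∃ x, p < F x) (hb : rq F p < b) :
    p < F b := by
  obtain ⟨x, hx, hxb⟩ := exists_lt_of_csInf_lt hne hb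
  exact lt_of_lt_of_le (α := ℝ) hx (hF hxb.le)

end Quantile

theorem tendsto_rq_of_tendsto_rat {G : ℕ → ℝ → ℝ} {F : ℝ → ℝ} {p : ℝ}
    (hG : ∀ n, Monotone (G n)) (hF : Monotone F)
    (hlim : ∀ r : ℚ, Tendsto (fun n => G n r) atTop (𝓝 (F r)))
    (hlo : ∃ x, F x < p) (hhi : ∃ x, p < F x) (heq : lq F p = rq F p) :
    Tendsto (fun n => rq (G n) p) atTop (𝓝 (rq F p)) := by
  set q := rq F p
  have hbdd : BddBelow {x | p ≤ F x} :=
    let ⟨x, hx⟩ := hlo; ⟨x, hF.mem_lowerBounds_setOf_le hx⟩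
  have hIcc : ∀ r s : ℚ, (r : ℝ) < q → q < s →
      ∀ᶠ n in atTop, rq (G n) p ∈ Set.Icc (r : ℝ) s := by
    intro r s hr hs
    have hFr : F r < p := lt_of_lt_lq hbdd (heq ▸ hr)
    have hFs : p < F s := hF.lt_of_rq_lt hhi hs
    filter_upwards [(hlim r).eventually_lt_const hFr, (hlim s).eventually_const_lt hFs]
      with n hGr hGs
    exact (hG n).rq_mem_Icc hGr hGs
  refine tendsto_order.2 ⟨fun a ha => ?_, fun b hb => ?_⟩
  · obtain ⟨r, har, hrq⟩ := exists_rat_btwn ha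
    obtain ⟨s, hqs, -⟩ := exists_rat_btwn (lt_add_one q)
    filter_upwards [hIcc r s hrq hqs] with n hn
    exact har.trans_le hn.1
  · obtain ⟨s, hqs, hsb⟩ := exists_rat_btwn hb
    obtain ⟨r, -, hrq⟩ := exists_rat_btwn (sub_one_lt q)
    filter_upwards [hIcc r s hrq hqs] with n hn
    exact hn.2.trans_lt hsb

lemma edf_monotone {Ω : Type*} (X : ℕ → Ω → ℝ) (n : ℕ) (ω : Ω) : Monotone (edf X n ω) :=
  fun _ _ hxy => div_le_div_of_nonneg_right
    (Nat.cast_le.2 (Finset.card_le_card (Finset.monotone_filter_right _ fun _ _ h => h.trans hxy)))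
    n.cast_nonneg

lemma edf_eq_sum_indicator {Ω : Type*} (X : ℕ → Ω → ℝ) (n : ℕ) (ω : Ω) (x : ℝ) :
    edf X n ω x = (∑ i ∈ Finset.range n, (Set.Iic x).indicator 1 (X i ω)) / n := by
  simp only [edf, Set.indicator_apply, Set.mem_Iic, Pi.one_apply, Finset.sum_boole]

lemma cdf_map_apply {Ω : Type*} [MeasurableSpace Ω] {μ : Measure Ω} [IsProbabilityMeasure μ]
    {Y : Ω → ℝ} (hY : AEMeasurable Y μ) (x : ℝ) :
    cdf (μ.map Y) x = μ.real {ω | Y ω ≤ x} := by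
  have := Measure.isProbabilityMeasure_map (μ := μ) hY
  rw [cdf_eq_real, map_measureReal_apply_of_aemeasurable hY measurableSet_Iic]
  rfl

theorem ae_tendsto_edf {Ω : Type*} [MeasurableSpace Ω] {μ : Measure Ω} [IsProbabilityMeasure μ]
    {X : ℕ → Ω → ℝ} (hindep : Pairwise fun i j => IndepFun (X i) (X j) μ)
    (hident : ∀ i, IdentDistrib (X i) (X 0) μ μ) (x : ℝ) :
    ∀ᵐ ω ∂μ, Tendsto (fun n => edf X n ω x) atTop (𝓝 (cdf (μ.map (X 0)) x)) := by
  set φ : ℝ → ℝ := (Set.Iic x).indicator 1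
  have hφ : Measurable φ := measurable_const.indicator measurableSet_Iic
  have hX0 : AEMeasurable (X 0) μ := (hident 0).aemeasurable_snd
  have := Measure.isProbabilityMeasure_map (μ := μ) hX0
  have hint : Integrable (φ ∘ X 0) μ :=
    (integrable_map_measure hφ.aestronglyMeasurable hX0).1
      ((integrable_const 1).indicator measurableSet_Iic)
  have hmean : μ[φ ∘ X 0] = cdf (μ.map (X 0)) x := by
    rw [cdf_eq_real, ← integral_indicator_one measurableSet_Iic,
      integral_map hX0 hφ.aestronglyMeasurable]
    rfl
  have hslln := strong_law_ae_real (fun i => φ ∘ X i) hint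
    (fun i j hij => (hindep hij).comp hφ hφ) (fun i => (hident i).comp hφ)
  filter_upwards [hslln] with ω hω
  rw [hmean] at hω
  simp_rw [edf_eq_sum_indicator]
  exact hω

theorem right_sample_quantile_tendsto_general
    {Ω : Type*} [MeasurableSpace Ω] (μ : Measure Ω) [IsProbabilityMeasure μ]
    (X : ℕ → Ω → ℝ)
    (hindep : iIndepFun X μ)
    (hident : ∀ i, IdentDistrib (X i) (X 0) μ μ)
    (F : ℝ → ℝ) (hF : ∀ x, F x = (μ {ω | X 0 ω ≤ x}).toReal)
    (p : ℝ) (hp : p ∈ Set.Ioo (0 : ℝ) 1)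
    (heq : lq F p = rq F p) :
    ∀ᵐ ω ∂μ, Tendsto (fun n => rq (edf X n ω) p) atTop (nhds (rq F p)) := by
  have hFcdf : F = cdf (μ.map (X 0)) :=
    funext fun x => by rw [hF, cdf_map_apply (hident 0).aemeasurable_snd]; rfl
  subst hFcdf
  have hlim := ae_all_iff.2 fun r : ℚ =>
    ae_tendsto_edf (fun i j hij => hindep.indepFun hij) hident r
  filter_upwards [hlim] with ω hω
  exact tendsto_rq_of_tendsto_rat (edf_monotone X · ω) (monotone_cdf _) hω
    ((tendsto_cdf_atBot _).eventually_lt_const hp.1).exists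
    ((tendsto_cdf_atTop _).eventually_const_lt hp.2).exists heq

/-- If the left and right quantiles of `F` at `p` coincide, then the right sample
quantile converges almost surely to `rq F p`. -/
theorem right_sample_quantile_tendsto
    {Ω : Type*} [MeasurableSpace Ω] (μ : Measure Ω) [IsProbabilityMeasure μ]
    (X : ℕ → Ω → ℝ) (hmeas : ∀ i, Measurable (X i))
    (hindep : iIndepFun X μ)
    (hident : ∀ i, IdentDistrib (X i) (X 0) μ μ)
    (F : ℝ → ℝ) (hF : ∀ x, F x = (μ {ω | X 0 ω ≤ x}).toReal)
    (p : ℝ) (hp : p ∈ Set.Ioo (0 : ℝ) 1)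
    (heq : lq F p = rq F p) :
    ∀ᵐ ω ∂μ, Tendsto (fun n => rq (edf X n ω) p) atTop (nhds (rq F p)) :=
  right_sample_quantile_tendsto_general μ X hindep hident F hF p hp heq
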